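/- arXiv:1312.0090 — 2 statements merged into one kernel-verified Lean document; each statement's English description precedes it below -/
import Mathlib

section
/- Let K be a field, Φ : U → V a smooth morphism of smooth K-varieties, g : V → A^1 a regular function, and f = g ∘ Φ : U → A^1. Then Crit(f) = Φ^{-1}(Crit(g)) as subsets of U (indeed as closed subschemes), and the restriction Φ|_{Crit(f)} : Crit(f) → Crit(g) is a smooth morphism of the same relative dimension as Φ. -/
/-!
If the maximal minors of the Jacobian matrix `J` of `Φ` generate the unit ideal, then `J` has a
right inverse `N` over `K[x]`, assembled from adjugates of the minors. By the chain rule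
`∇f = (∇g ∘ Φ) J`, hence `∇g ∘ Φ = ∇f N`, so the Jacobian ideal of `f` is the pullback of that of
`g`; evaluating at a point gives the pointwise statement. The same right inverse performs the
Newton step that lifts solutions of `Φ(x) = y` across square-zero thickenings, so
`K[y] → K[x]` is smooth, and `Crit(f) → Crit(g)` is smooth as its base change along
`K[y] → K[y] ⧸ J_g`.
-/

open MvPolynomial Matrix

theorem RingHom.Smooth.quotientMap_of_map_eq {A B : Type*} [CommRing A] [CommRing B]
    {f : A →+* B} (hf : f.Smooth) (J : Ideal A) {I : Ideal B} (hI : J.map f = I)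
    (H : J ≤ I.comap f) :
    (Ideal.quotientMap I f H).Smooth := by
  subst hI
  algebraize [f]
  have : Algebra.Smooth (A ⧸ J) (B ⧸ J.map (algebraMap A B)) :=
    .of_equiv (Algebra.TensorProduct.quotIdealMapEquivQuotTensor B J).symm
  exact RingHom.smooth_algebraMap.mpr this

theorem Ideal.span_range_vecMul_le {R m n : Type*} [CommSemiring R] [Fintype m] (v : m → R)
    (M : Matrix m n R) : Ideal.span (Set.range (v ᵥ* M)) ≤ Ideal.span (Set.range v) := by
  rw [Ideal.span_le]
  rintro _ ⟨i, rfl⟩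
  exact Ideal.sum_mem _ fun j _ => Ideal.mul_mem_right _ _ (Ideal.subset_span ⟨j, rfl⟩)

theorem Ideal.forall_apply_eq_zero_iff_of_span_range_eq {R S ι κ : Type*} [CommSemiring R]
    [Semiring S] (φ : R →+* S) {v : ι → R} {w : κ → R}
    (h : Ideal.span (Set.range v) = Ideal.span (Set.range w)) :
    (∀ i, φ (v i) = 0) ↔ ∀ j, φ (w j) = 0 := by
  simp only [← RingHom.mem_ker, ← SetLike.mem_coe]
  rw [← Set.range_subset_iff, ← Set.range_subset_iff, ← Ideal.span_le, ← Ideal.span_le, h]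

theorem Matrix.exists_mul_eq_one_of_span_det_submatrix_eq_top {R m n : Type*} [CommRing R]
    [Fintype m] [DecidableEq m] [Fintype n] [DecidableEq n] (M : Matrix m n R)
    (hM : Ideal.span (Set.range fun e : m ↪ n => (M.submatrix id e).det) = ⊤) :
    ∃ N : Matrix n m R, M * N = 1 := by
  obtain ⟨c, hc⟩ := Ideal.mem_span_range_iff_exists_fun.mp (hM ▸ Submodule.mem_top (x := 1))
  have hsub : ∀ e : m ↪ n, M * (1 : Matrix n n R).submatrix id e = M.submatrix id e := by
    intro e; ext i j; simp [Matrix.mul_apply, Matrix.one_apply]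
  refine ⟨∑ e, c e • ((1 : Matrix n n R).submatrix id e * (M.submatrix id e).adjugate), ?_⟩
  simp only [Matrix.mul_sum, Matrix.mul_smul, ← Matrix.mul_assoc, hsub, Matrix.mul_adjugate,
    smul_smul, ← Finset.sum_smul, hc, one_smul]

namespace MvPolynomial

variable {R σ τ : Type*} [CommRing R]

noncomputable def jacobian (Φ : τ → MvPolynomial σ R) : Matrix τ σ (MvPolynomial σ R) :=
  Matrix.of fun j i => pderiv i (Φ j)

theorem pderiv_aeval [Fintype τ] (Φ : τ → MvPolynomial σ R) (g : MvPolynomial τ R) (i : σ) :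
    pderiv i (aeval Φ g) = ∑ j, aeval Φ (pderiv j g) * pderiv i (Φ j) := by
  classical
  induction g using MvPolynomial.induction_on with
  | C r => simp
  | add p q hp hq => simp only [map_add, hp, hq, add_mul, Finset.sum_add_distrib]
  | mul_X p k hp =>
    simp only [map_mul, aeval_X, pderiv_mul, hp, pderiv_X, Pi.single_apply, mul_ite, mul_one,
      mul_zero, map_add, add_mul, Finset.sum_add_distrib, apply_ite (aeval Φ), map_zero, ite_mul,
      zero_mul, Finset.sum_ite_eq, Finset.mem_univ, if_true, Finset.sum_mul]
    congr 1
    exact Finset.sum_congr rfl fun _ _ => by ring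

theorem aeval_add_sub_mem_sq [Fintype σ] {S : Type*} [CommRing S] [Algebra R S] (I : Ideal S)
    (u h : σ → S) (hh : ∀ i, h i ∈ I) (p : MvPolynomial σ R) :
    aeval (u + h) p - (aeval u p + ∑ i, aeval u (pderiv i p) * h i) ∈ I ^ 2 := by
  classical
  induction p using MvPolynomial.induction_on with
  | C r => simp
  | add p q hp hq =>
    convert (I ^ 2).add_mem hp hq using 1
    simp only [map_add, add_mul, Finset.sum_add_distrib]
    ring
  | mul_X p k hp =>
    have hlin : ∑ i, aeval u (pderiv i p) * h i ∈ I :=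
      Ideal.sum_mem _ fun i _ => I.mul_mem_left _ (hh i)
    have hsq : (∑ i, aeval u (pderiv i p) * h i) * h k ∈ I ^ 2 := by
      rw [pow_two]; exact Ideal.mul_mem_mul hlin (hh k)
    have hgrad : ∑ i, aeval u (pderiv i (p * X k)) * h i
        = (∑ i, aeval u (pderiv i p) * h i) * u k + aeval u p * h k := by
      simp only [Derivation.leibniz, pderiv_X, Pi.single_apply, smul_eq_mul, map_add, map_mul,
        aeval_X, mul_ite, mul_one, mul_zero, apply_ite (aeval u), map_zero, add_mul, ite_mul,
        zero_mul, Finset.sum_add_distrib, Finset.sum_ite_eq, Finset.mem_univ, if_true,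
        Finset.sum_mul]
      rw [add_comm]
      congr 1
      exact Finset.sum_congr rfl fun _ _ => by ring
    convert (I ^ 2).add_mem ((I ^ 2).mul_mem_right (u k + h k) hp) hsq using 1
    rw [hgrad, map_mul, map_mul, aeval_X, aeval_X, Pi.add_apply]
    ring

theorem exists_aeval_add_eq_of_jacobian_mul_eq_one [Fintype σ] [Fintype τ] [DecidableEq τ]
    {Φ : τ → MvPolynomial σ R} {N : Matrix σ τ (MvPolynomial σ R)} (hN : jacobian Φ * N = 1)
    {T : Type*} [CommRing T] [Algebra R T] {I : Ideal T} (hI : I ^ 2 = ⊥) (c : σ → T)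
    (y : τ → T) (hy : ∀ j, y j - aeval c (Φ j) ∈ I) :
    ∃ h : σ → T, (∀ i, h i ∈ I) ∧ ∀ j, aeval (c + h) (Φ j) = y j := by
  set e : τ → T := fun j => y j - aeval c (Φ j)
  set h : σ → T := (N.map (aeval c)) *ᵥ e
  have hJh : (jacobian Φ).map (aeval c) *ᵥ h = e := by
    rw [Matrix.mulVec_mulVec, ← Matrix.map_mul, hN, Matrix.map_one _ (map_zero _) (map_one _),
      Matrix.one_mulVec]
  have hh : ∀ i, h i ∈ I := fun i => Ideal.sum_mem _ fun k _ => I.mul_mem_left _ (hy k)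
  refine ⟨h, hh, fun j => ?_⟩
  have htaylor := aeval_add_sub_mem_sq I c h hh (Φ j)
  rw [hI, Ideal.mem_bot, sub_eq_zero] at htaylor
  have hlin : ((jacobian Φ).map (aeval c) *ᵥ h) j = ∑ i, aeval c (pderiv i (Φ j)) * h i := rfl
  rw [htaylor, ← hlin, hJh, add_sub_cancel]

theorem formallySmooth_aeval [Fintype σ] [Fintype τ] [DecidableEq τ] (Φ : τ → MvPolynomial σ R)
    (N : Matrix σ τ (MvPolynomial σ R)) (hN : jacobian Φ * N = 1) :
    (aeval Φ : MvPolynomial τ R →ₐ[R] MvPolynomial σ R).toRingHom.FormallySmooth := by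
  algebraize [(aeval Φ : MvPolynomial τ R →ₐ[R] MvPolynomial σ R).toRingHom]
  refine Algebra.FormallySmooth.of_comp_surjective fun T _ _ I hI φ => ?_
  let : Algebra R T := ((algebraMap (MvPolynomial τ R) T).comp C).toAlgebra
  have hφ : ∀ u : σ → T, (∀ i, Ideal.Quotient.mk I (u i) = φ (X i)) →
      ∀ p, Ideal.Quotient.mk I (aeval u p) = φ p := by
    intro u hu p
    have hC : ∀ r, φ (C r) = Ideal.Quotient.mk I (algebraMap (MvPolynomial τ R) T (C r)) := by
      intro r
      rw [Ideal.Quotient.mk_algebraMap, ← φ.commutes]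
      simp [RingHom.algebraMap_toAlgebra]
    have hext : (Ideal.Quotient.mk I).comp (aeval u).toRingHom = φ.toRingHom :=
      MvPolynomial.ringHom_ext (fun r => by simp [hC]; rfl) fun i => by simpa using hu i
    exact RingHom.congr_fun hext p
  choose c hc using fun i => Ideal.Quotient.mk_surjective (φ (X i))
  obtain ⟨h, hh, hroot⟩ := exists_aeval_add_eq_of_jacobian_mul_eq_one hN hI c
    (fun j => algebraMap (MvPolynomial τ R) T (X j)) fun j => by
      rw [← Ideal.Quotient.eq_zero_iff_mem, map_sub, hφ c hc, Ideal.Quotient.mk_algebraMap,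
        ← φ.commutes]
      simp [RingHom.algebraMap_toAlgebra]
  have hcomm : ((aeval (c + h)).toRingHom.comp (algebraMap (MvPolynomial τ R) (MvPolynomial σ R)))
      = algebraMap (MvPolynomial τ R) T := by
    refine MvPolynomial.ringHom_ext (fun r => ?_) fun j => ?_
    · simp [RingHom.algebraMap_toAlgebra]
    · simp [RingHom.algebraMap_toAlgebra, hroot]
  refine ⟨{ (aeval (c + h)).toRingHom with commutes' := RingHom.congr_fun hcomm }, ?_⟩
  refine AlgHom.ext fun p => hφ (c + h) (fun i => ?_) p
  rw [Pi.add_apply, map_add, hc, Ideal.Quotient.eq_zero_iff_mem.mpr (hh i), add_zero]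

theorem smooth_aeval [Fintype σ] [Fintype τ] [DecidableEq τ] (Φ : τ → MvPolynomial σ R)
    (N : Matrix σ τ (MvPolynomial σ R)) (hN : jacobian Φ * N = 1) :
    (aeval Φ : MvPolynomial τ R →ₐ[R] MvPolynomial σ R).toRingHom.Smooth := by
  refine RingHom.smooth_def.mpr ⟨formallySmooth_aeval Φ N hN, ?_⟩
  refine RingHom.FinitePresentation.of_comp_finiteType (algebraMap R (MvPolynomial τ R)) ?_
    (RingHom.finiteType_algebraMap.mpr inferInstance)
  rw [AlgHom.toRingHom_eq_coe, AlgHom.comp_algebraMap]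
  exact RingHom.finitePresentation_algebraMap.mpr inferInstance

theorem span_range_pderiv_aeval_eq [Fintype σ] [Fintype τ] [DecidableEq τ]
    (Φ : τ → MvPolynomial σ R) (N : Matrix σ τ (MvPolynomial σ R)) (hN : jacobian Φ * N = 1)
    (g : MvPolynomial τ R) :
    Ideal.span (Set.range fun i => pderiv i (aeval Φ g))
      = Ideal.span (Set.range fun j => aeval Φ (pderiv j g)) := by
  have hchain :
      (fun i => pderiv i (aeval Φ g)) = (fun j => aeval Φ (pderiv j g)) ᵥ* jacobian Φ := by
    ext1 i
    exact pderiv_aeval Φ g i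
  have hinv : (fun j => aeval Φ (pderiv j g)) = (fun i => pderiv i (aeval Φ g)) ᵥ* N := by
    rw [hchain, Matrix.vecMul_vecMul, hN, Matrix.vecMul_one]
  exact le_antisymm (hchain ▸ Ideal.span_range_vecMul_le _ _)
    (hinv ▸ Ideal.span_range_vecMul_le _ _)

end MvPolynomial

/-- **Critical loci pull back along smooth morphisms.**  Let `K` be a field,
`Φ : 𝔸ᵃ → 𝔸ᵇ` a smooth morphism (given by polynomials `Φ j`, smoothness being the
condition that the `b × b` minors of its Jacobian matrix generate the unit ideal, i.e.
the differential of `Φ` is surjective at every point), `g : 𝔸ᵇ → 𝔸¹` a regular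
function, and `f = g ∘ Φ : 𝔸ᵃ → 𝔸¹` (that is, `f = aeval Φ g`).  Then
`Crit(f) = Φ⁻¹(Crit(g))`, both as subsets of `K`-points and as closed subschemes
(the Jacobian ideal of `f` equals the pullback of the Jacobian ideal of `g`), and the
restriction `Φ|_{Crit(f)} : Crit(f) → Crit(g)` is a smooth morphism (its map of
coordinate rings, induced by `aeval Φ` on the quotients by the Jacobian ideals, is a
smooth ring homomorphism). -/
theorem crit_comp_smooth (K : Type) [Field K] (a b : ℕ)
    (Φ : Fin b → MvPolynomial (Fin a) K) (g : MvPolynomial (Fin b) K)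
    (hsm : Ideal.span
        {q : MvPolynomial (Fin a) K |
          ∃ σ : Fin b ↪ Fin a,
            q = Matrix.det (Matrix.of fun j j' : Fin b => pderiv (σ j') (Φ j))} = ⊤) :
    (∀ x : Fin a → K,
        (∀ i, eval x (pderiv i (aeval Φ g)) = 0)
          ↔ (∀ j, eval (fun j' => eval x (Φ j')) (pderiv j g) = 0)) ∧
    Ideal.span (Set.range fun i => pderiv i (aeval Φ g))
      = Ideal.span (Set.range fun j => aeval Φ (pderiv j g)) ∧
    ∀ H : Ideal.span (Set.range fun j => pderiv j g) ≤
        Ideal.comap (aeval Φ : MvPolynomial (Fin b) K →ₐ[K] MvPolynomial (Fin a) K).toRingHom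
          (Ideal.span (Set.range fun i => pderiv i (aeval Φ g))),
      @Algebra.Smooth
        (MvPolynomial (Fin b) K ⧸ Ideal.span (Set.range fun j => pderiv j g)) _
        (MvPolynomial (Fin a) K ⧸ Ideal.span (Set.range fun i => pderiv i (aeval Φ g))) _
        (Ideal.quotientMap _ (aeval Φ).toRingHom H).toAlgebra := by
  have hminors :
      Ideal.span (Set.range fun e : Fin b ↪ Fin a => ((jacobian Φ).submatrix id e).det) = ⊤ := by
    rw [← hsm]
    congr 1
    exact Set.ext fun q => ⟨fun ⟨e, he⟩ => ⟨e, he.symm⟩, fun ⟨e, he⟩ => ⟨e, he.symm⟩⟩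
  obtain ⟨N, hN⟩ := (jacobian Φ).exists_mul_eq_one_of_span_det_submatrix_eq_top hminors
  have hspan := span_range_pderiv_aeval_eq Φ N hN g
  refine ⟨fun x => ?_, hspan, fun H => ?_⟩
  · simpa only [← aeval_eq_eval, comp_aeval_apply] using
      Ideal.forall_apply_eq_zero_iff_of_span_range_eq (eval x) hspan
  · refine (smooth_aeval Φ N hN).quotientMap_of_map_eq _ ?_ H
    rw [hspan, Ideal.map_span, ← Set.range_comp]
    rfl
end

section
/- Let K be a field of characteristic zero, R = K[x_1,…,x_m] a polynomial ring, d ≥ 0, and A the free graded-commutative R-algebra on generators x^{-i}_1,…,x^{-i}_{m_i} in degree −i for i = 1,…,d and y^{i-2d-1}_1,…,y^{i-2d-1}_{m_i} in degree i−2d−1 for i = 0,…,d (the degree-0 generators x^0_j being identified with the polynomial variables x_j, with m_0 = m). Suppose H ∈ A^{-2d} satisfies the classical master equation Σ_{i=1}^{d} Σ_{j=1}^{m_i} (∂H/∂x^{-i}_j)(∂H/∂y^{i-2d-1}_j) = 0 in A^{1-2d}. Define a degree-+1 derivation d on A by d = 0 on R and d x^{-i}_j = ∂H/∂y^{i-2d-1}_j,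 d y^{i-2d-1}_j = ∂H/∂x^{-i}_j for all i, j. Then d ∘ d = 0, so (A, d) is a commutative differential graded algebra. -/
/-!
A graded derivation vanishing on a homogeneous generating set vanishes. Hence `D` equals the
Hamiltonian field `E = ∑_q (∂H/∂y_q) ∂/∂x_q + (∂H/∂x_q) ∂/∂y_q` (both are degree-one derivations
with the same values on generators), and the partial derivatives graded-commute (their graded
commutators kill every generator). Commuting a partial derivative `P` past the sum defining `E`
gives `E (P H) = ± P (∑_q ∂H/∂x_q · ∂H/∂y_q)`, which vanishes by the master equation; the terms
with `q` in degree `0` that the master equation omits vanish because `∂H/∂y_q` has degree `1`.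
So `D` kills `D x_p = ∂H/∂y_p` and `D y_p = ∂H/∂x_p`. Finally, `D` being odd, `D ∘ D` is again a
derivation, and as it vanishes on the generators it is zero.
-/

lemma Int.negOnePow_eq_of_zmod_two_eq {a b : ℤ} (h : (a : ZMod 2) = b) :
    a.negOnePow = b.negOnePow := by
  rw [Int.negOnePow_eq_iff, ← ZMod.intCast_eq_zero_iff_even, Int.cast_sub, h, sub_self]

section GradedDerivation

variable {K A : Type*} [CommRing K] [Ring A] [Algebra K A] (𝒜 : ℤ → Submodule K A)

def IsGradedCommutative : Prop :=
  ∀ (s t : ℤ) (a b : A), a ∈ 𝒜 s → b ∈ 𝒜 t → a * b = ((s * t).negOnePow : ℤ) • (b * a)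

structure IsGradedDerivation (n : ℤ) (P : A →ₗ[K] A) : Prop where
  map_mem {s : ℤ} {a : A} : a ∈ 𝒜 s → P a ∈ 𝒜 (s + n)
  map_mul {s : ℤ} {a : A} (b : A) :
    a ∈ 𝒜 s → P (a * b) = P a * b + ((n * s).negOnePow : ℤ) • (a * P b)

def gradedCommutator (α β : ℤ) (P Q : A →ₗ[K] A) : A →ₗ[K] A :=
  P ∘ₗ Q - ((α * β).negOnePow : ℤ) • (Q ∘ₗ P)

lemma gradedCommutator_apply (α β : ℤ) (P Q : A →ₗ[K] A) (a : A) :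
    gradedCommutator α β P Q a = P (Q a) - ((α * β).negOnePow : ℤ) • Q (P a) :=
  rfl

namespace IsGradedDerivation

variable {𝒜} {n α β : ℤ} {P Q : A →ₗ[K] A}

lemma map_one_eq_zero [SetLike.GradedOne 𝒜] (hP : IsGradedDerivation 𝒜 n P) : P 1 = 0 := by
  simpa using hP.map_mul 1 SetLike.GradedOne.one_mem

lemma map_algebraMap [SetLike.GradedOne 𝒜] (hP : IsGradedDerivation 𝒜 n P) (k : K) :
    P (algebraMap K A k) = 0 := by
  rw [Algebra.algebraMap_eq_smul_one, map_smul, hP.map_one_eq_zero, smul_zero]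

lemma zero : IsGradedDerivation 𝒜 n 0 where
  map_mem _ := zero_mem _
  map_mul _ _ := by simp

lemma add (hP : IsGradedDerivation 𝒜 n P) (hQ : IsGradedDerivation 𝒜 n Q) :
    IsGradedDerivation 𝒜 n (P + Q) where
  map_mem ha := add_mem (hP.map_mem ha) (hQ.map_mem ha)
  map_mul b ha := by
    simp only [LinearMap.add_apply, hP.map_mul b ha, hQ.map_mul b ha, add_mul, mul_add, smul_add]
    abel

lemma sub (hP : IsGradedDerivation 𝒜 n P) (hQ : IsGradedDerivation 𝒜 n Q) :
    IsGradedDerivation 𝒜 n (P - Q) where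
  map_mem ha := sub_mem (hP.map_mem ha) (hQ.map_mem ha)
  map_mul b ha := by
    simp only [LinearMap.sub_apply, hP.map_mul b ha, hQ.map_mul b ha, sub_mul, mul_sub, smul_sub]
    abel

lemma sum {ι : Type*} (s : Finset ι) {P : ι → A →ₗ[K] A}
    (hP : ∀ i ∈ s, IsGradedDerivation 𝒜 n (P i)) : IsGradedDerivation 𝒜 n (∑ i ∈ s, P i) :=
  Finset.sum_induction P _ (fun _ _ => add) zero hP

lemma mulLeft [SetLike.GradedMul 𝒜] (hcomm : IsGradedCommutative 𝒜)
    (hP : IsGradedDerivation 𝒜 α P) {γ : ℤ} {c : A} (hc : c ∈ 𝒜 γ) :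
    IsGradedDerivation 𝒜 (γ + α) (LinearMap.mulLeft K c ∘ₗ P) where
  map_mem {s} _ ha := by
    rw [show s + (γ + α) = γ + (s + α) by ring]
    exact SetLike.GradedMul.mul_mem hc (hP.map_mem ha)
  map_mul {s a} b ha := by
    simp only [LinearMap.comp_apply, LinearMap.mulLeft_apply, hP.map_mul b ha, mul_add,
      mul_smul_comm, ← mul_assoc, hcomm γ s c a hc ha, smul_mul_assoc, smul_smul,
      ← Units.val_mul, ← Int.negOnePow_add, add_mul]
    rw [add_comm (α * s)]

lemma comp_self (hP : IsGradedDerivation 𝒜 n P) (hn : Odd n) :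
    IsGradedDerivation 𝒜 (n + n) (P ∘ₗ P) where
  map_mem ha := by rw [← add_assoc]; exact hP.map_mem (hP.map_mem ha)
  map_mul {s a} b ha := by
    have hsign : (n * (s + n)).negOnePow = -(n * s).negOnePow := by
      rw [mul_add, Int.negOnePow_add, Int.negOnePow_mul_self, Int.negOnePow_odd n hn, mul_neg_one]
    simp only [LinearMap.comp_apply, hP.map_mul b ha, map_add, map_zsmul,
      hP.map_mul (P b) ha, hP.map_mul b (hP.map_mem ha), hsign]
    simp only [smul_add, smul_smul, Units.val_neg, neg_smul, ← Units.val_mul, ← Int.negOnePow_add,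
      ← add_mul]
    abel

lemma commutator (hP : IsGradedDerivation 𝒜 α P) (hQ : IsGradedDerivation 𝒜 β Q) :
    IsGradedDerivation 𝒜 (α + β) (gradedCommutator α β P Q) where
  map_mem {s} _ ha := by
    rw [gradedCommutator_apply]
    refine sub_mem ?_ (zsmul_mem ?_ _)
    · rw [show s + (α + β) = s + β + α by ring]; exact hP.map_mem (hQ.map_mem ha)
    · rw [← add_assoc]; exact hQ.map_mem (hP.map_mem ha)
  map_mul {s a} b ha := by
    simp only [gradedCommutator_apply, hQ.map_mul b ha, hP.map_mul b ha, map_add, map_zsmul,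
      hP.map_mul b (hQ.map_mem ha), hP.map_mul (Q b) ha, hQ.map_mul b (hP.map_mem ha),
      hQ.map_mul (P b) ha]
    simp only [mul_sub, sub_mul, smul_sub, mul_add, add_mul, smul_add, smul_smul,
      mul_smul_comm, smul_mul_assoc]
    match_scalars
    all_goals
      simp only [mul_one, ← Units.val_mul, ← Int.negOnePow_add, sub_eq_zero, neg_inj,
        Units.val_inj]
    all_goals
      apply Int.negOnePow_eq_of_zmod_two_eq
      push_cast
      generalize (α : ZMod 2) = u, (β : ZMod 2) = v, (s : ZMod 2) = w
      revert u v w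
      decide

lemma eq_zero_of_adjoin [SetLike.GradedMonoid 𝒜] (hP : IsGradedDerivation 𝒜 n P) {S : Set A}
    (hS : ∀ a ∈ S, ∃ s, a ∈ 𝒜 s) (hgen : Algebra.adjoin K S = ⊤) (h : ∀ a ∈ S, P a = 0) :
    P = 0 := by
  have hmonoid : ∀ w ∈ Submonoid.closure S, (∃ s, w ∈ 𝒜 s) ∧ P w = 0 := by
    intro w hw
    induction hw using Submonoid.closure_induction with
    | mem g hg => exact ⟨hS g hg, h g hg⟩
    | one => exact ⟨⟨0, SetLike.GradedOne.one_mem⟩, hP.map_one_eq_zero⟩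
    | mul u v _ _ hu hv =>
      obtain ⟨⟨s, hus⟩, hPu⟩ := hu
      obtain ⟨⟨t, hvt⟩, hPv⟩ := hv
      refine ⟨⟨s + t, SetLike.GradedMul.mul_mem hus hvt⟩, ?_⟩
      rw [hP.map_mul v hus, hPu, hPv, zero_mul, mul_zero, smul_zero, add_zero]
  refine LinearMap.ext fun a => ?_
  rw [LinearMap.zero_apply]
  have ha : a ∈ Submodule.span K (Submonoid.closure S : Set A) := by
    rw [← Algebra.adjoin_eq_span, hgen]
    trivial
  induction ha using Submodule.span_induction with
  | mem w hw => exact (hmonoid w hw).2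
  | zero => exact map_zero P
  | add u v _ _ hu hv => rw [map_add, hu, hv, add_zero]
  | smul k u _ hu => rw [map_smul, hu, smul_zero]

lemma gradedCommutator_eq_zero [SetLike.GradedMonoid 𝒜] (hP : IsGradedDerivation 𝒜 α P)
    (hQ : IsGradedDerivation 𝒜 β Q) {S : Set A} (hS : ∀ a ∈ S, ∃ s, a ∈ 𝒜 s)
    (hgen : Algebra.adjoin K S = ⊤) (hPS : ∀ a ∈ S, P a ∈ Set.range (algebraMap K A))
    (hQS : ∀ a ∈ S, Q a ∈ Set.range (algebraMap K A)) :
    gradedCommutator α β P Q = 0 := by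
  refine (hP.commutator hQ).eq_zero_of_adjoin hS hgen fun a ha => ?_
  obtain ⟨k, hk⟩ := hPS a ha
  obtain ⟨l, hl⟩ := hQS a ha
  rw [gradedCommutator_apply, ← hk, ← hl, hP.map_algebraMap,
    hQ.map_algebraMap, smul_zero, sub_zero]

end IsGradedDerivation
end GradedDerivation

section Hamiltonian

variable {K A ι : Type*} [CommRing K] [Ring A] [Algebra K A] {𝒜 : ℤ → Submodule K A}
  [Fintype ι]

def hamiltonianField (X Y : ι → A →ₗ[K] A) (H : A) : A →ₗ[K] A :=
  ∑ q, (LinearMap.mulLeft K (Y q H) ∘ₗ X q + LinearMap.mulLeft K (X q H) ∘ₗ Y q)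

lemma hamiltonianField_apply (X Y : ι → A →ₗ[K] A) (H v : A) :
    hamiltonianField X Y H v = ∑ q, (Y q H * X q v + X q H * Y q v) := by
  simp [hamiltonianField, LinearMap.sum_apply]

variable {X Y : ι → A →ₗ[K] A} {H : A} {a b : ι → ℤ} {h : ℤ}

lemma isGradedDerivation_hamiltonianField [SetLike.GradedMul 𝒜] (hcomm : IsGradedCommutative 𝒜)
    (hX : ∀ q, IsGradedDerivation 𝒜 (a q) (X q)) (hY : ∀ q, IsGradedDerivation 𝒜 (b q) (Y q))
    (hH : H ∈ 𝒜 h) (hab : ∀ q, h + a q + b q = 1) :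
    IsGradedDerivation 𝒜 1 (hamiltonianField X Y H) := by
  refine IsGradedDerivation.sum _ fun q _ => IsGradedDerivation.add ?_ ?_
  · convert (hX q).mulLeft hcomm ((hY q).map_mem hH) using 1
    linarith [hab q]
  · convert (hY q).mulLeft hcomm ((hX q).map_mem hH) using 1
    linarith [hab q]

lemma hamiltonianField_apply_map (hcomm : IsGradedCommutative 𝒜)
    (hX : ∀ q, IsGradedDerivation 𝒜 (a q) (X q)) (hY : ∀ q, IsGradedDerivation 𝒜 (b q) (Y q))
    (hH : H ∈ 𝒜 h) (hh : Even h) (hab : ∀ q, h + a q + b q = 1) {α : ℤ} {P : A →ₗ[K] A}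
    (hP : IsGradedDerivation 𝒜 α P) (hXP : ∀ q, gradedCommutator (a q) α (X q) P = 0)
    (hYP : ∀ q, gradedCommutator (b q) α (Y q) P = 0) :
    hamiltonianField X Y H (P H) = (α.negOnePow : ℤ) • P (∑ q, X q H * Y q H) := by
  rw [hamiltonianField_apply, map_sum, Finset.smul_sum]
  refine Finset.sum_congr rfl fun q _ => ?_
  have hXq : X q (P H) = ((a q * α).negOnePow : ℤ) • P (X q H) := by
    rw [← sub_eq_zero, ← gradedCommutator_apply, hXP q, LinearMap.zero_apply]
  have hYq : Y q (P H) = ((b q * α).negOnePow : ℤ) • P (Y q H) := by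
    rw [← sub_eq_zero, ← gradedCommutator_apply, hYP q, LinearMap.zero_apply]
  rw [hXq, hYq, hP.map_mul _ ((hX q).map_mem hH), mul_smul_comm,
    hcomm _ _ _ _ ((hY q).map_mem hH) (hP.map_mem ((hX q).map_mem hH))]
  simp only [mul_smul_comm, smul_add, smul_smul]
  have hh2 : (h : ZMod 2) = 0 := ZMod.intCast_eq_zero_iff_even.mpr hh
  have hb2 : (b q : ZMod 2) = 1 - a q := by
    have hab2 := congrArg (Int.cast : ℤ → ZMod 2) (hab q)
    push_cast [hh2] at hab2
    linear_combination hab2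
  match_scalars
  all_goals
    simp only [mul_one, ← Units.val_mul, ← Int.negOnePow_add, Units.val_inj]
    apply Int.negOnePow_eq_of_zmod_two_eq
    push_cast
    rw [hh2, hb2]
    generalize (α : ZMod 2) = u, (a q : ZMod 2) = v
    revert u v
    decide

lemma IsGradedDerivation.comp_self_eq_zero_of_master_equation [DecidableEq ι]
    [SetLike.GradedMonoid 𝒜] (hcomm : IsGradedCommutative 𝒜) {x y : ι → A}
    (hS : ∀ c ∈ Set.range x ∪ Set.range y, ∃ s, c ∈ 𝒜 s)
    (hgen : Algebra.adjoin K (Set.range x ∪ Set.range y) = ⊤)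
    (hX : ∀ q, IsGradedDerivation 𝒜 (a q) (X q)) (hY : ∀ q, IsGradedDerivation 𝒜 (b q) (Y q))
    (hXx : ∀ p q, X p (x q) = if p = q then 1 else 0) (hXy : ∀ p q, X p (y q) = 0)
    (hYy : ∀ p q, Y p (y q) = if p = q then 1 else 0) (hYx : ∀ p q, Y p (x q) = 0)
    (hH : H ∈ 𝒜 h) (hh : Even h) (hab : ∀ q, h + a q + b q = 1)
    (hmaster : ∑ q, X q H * Y q H = 0) {D : A →ₗ[K] A} (hD : IsGradedDerivation 𝒜 1 D)
    (hDx : ∀ p, D (x p) = Y p H) (hDy : ∀ p, D (y p) = X p H) :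
    D ∘ₗ D = 0 := by
  have hDE : D = hamiltonianField X Y H := by
    have hE := isGradedDerivation_hamiltonianField hcomm hX hY hH hab
    refine sub_eq_zero.mp ((hD.sub hE).eq_zero_of_adjoin hS hgen ?_)
    rintro _ (⟨p, rfl⟩ | ⟨p, rfl⟩) <;> simp [hamiltonianField_apply, hXx, hYx, hXy, hYy, hDx, hDy]
  have hXS : ∀ p, ∀ c ∈ Set.range x ∪ Set.range y, X p c ∈ Set.range (algebraMap K A) := by
    rintro p _ (⟨q, rfl⟩ | ⟨q, rfl⟩)
    exacts [⟨if p = q then 1 else 0, by rw [hXx]; split_ifs <;> simp⟩, ⟨0, by simp [hXy]⟩]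
  have hYS : ∀ p, ∀ c ∈ Set.range x ∪ Set.range y, Y p c ∈ Set.range (algebraMap K A) := by
    rintro p _ (⟨q, rfl⟩ | ⟨q, rfl⟩)
    exacts [⟨0, by simp [hYx]⟩, ⟨if p = q then 1 else 0, by rw [hYy]; split_ifs <;> simp⟩]
  have hDPH : ∀ {α : ℤ} {P : A →ₗ[K] A}, IsGradedDerivation 𝒜 α P →
      (∀ c ∈ Set.range x ∪ Set.range y, P c ∈ Set.range (algebraMap K A)) → D (P H) = 0 :=
    fun hP hPS => by
      rw [hDE, hamiltonianField_apply_map hcomm hX hY hH hh hab hP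
        (fun q => (hX q).gradedCommutator_eq_zero hP hS hgen (hXS q) hPS)
        (fun q => (hY q).gradedCommutator_eq_zero hP hS hgen (hYS q) hPS),
        hmaster, map_zero, smul_zero]
  refine (hD.comp_self odd_one).eq_zero_of_adjoin hS hgen ?_
  rintro _ (⟨p, rfl⟩ | ⟨p, rfl⟩)
  · rw [LinearMap.comp_apply, hDx, hDPH (hY p) (hYS p)]
  · rw [LinearMap.comp_apply, hDy, hDPH (hX p) (hXS p)]

end Hamiltonian

theorem darboux_differential_squares_to_zero_general
    (K : Type) [Field K] (A : Type) [Ring A] [Algebra K A]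
    (𝒜 : ℤ → Submodule K A) [GradedRing 𝒜]
    (d : ℕ) (m : Fin (d + 1) → ℕ)
    (x y : (Σ i : Fin (d + 1), Fin (m i)) → A)
    -- degrees of the generators
    (hxdeg : ∀ p, x p ∈ 𝒜 (-(p.1 : ℤ)))
    (hydeg : ∀ p, y p ∈ 𝒜 ((p.1 : ℤ) - (2 * d + 1)))
    -- `A` is concentrated in degrees `≤ 0`
    (hneg : ∀ n : ℤ, 0 < n → ∀ a ∈ 𝒜 n, a = 0)
    -- graded commutativity
    (hcomm : ∀ (s t : ℤ) (a b : A), a ∈ 𝒜 s → b ∈ 𝒜 t →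
        a * b = ((s * t).negOnePow : ℤ) • (b * a))
    -- `A` is generated over `K` by the generators
    (hgen : Algebra.adjoin K (Set.range x ∪ Set.range y) = ⊤)
    -- the differential: a `K`-linear degree `+1` graded derivation
    (D : A →ₗ[K] A)
    (hDdeg : ∀ (s : ℤ) (a : A), a ∈ 𝒜 s → D a ∈ 𝒜 (s + 1))
    (hDleib : ∀ (s : ℤ) (a b : A), a ∈ 𝒜 s →
        D (a * b) = D a * b + (s.negOnePow : ℤ) • (a * D b))
    -- the partial derivatives: `K`-linear graded derivations dual to the generators
    (Px Py : (Σ i : Fin (d + 1), Fin (m i)) → (A →ₗ[K] A))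
    (hPxdeg : ∀ p (s : ℤ) (a : A), a ∈ 𝒜 s → Px p a ∈ 𝒜 (s + (p.1 : ℤ)))
    (hPydeg : ∀ p (s : ℤ) (a : A), a ∈ 𝒜 s → Py p a ∈ 𝒜 (s + (2 * d + 1) - (p.1 : ℤ)))
    (hPxleib : ∀ p (s : ℤ) (a b : A), a ∈ 𝒜 s →
        Px p (a * b) = Px p a * b + (((p.1 : ℤ) * s).negOnePow : ℤ) • (a * Px p b))
    (hPyleib : ∀ p (s : ℤ) (a b : A), a ∈ 𝒜 s →
        Py p (a * b)
          = Py p a * b + ((((2 * d + 1 : ℤ) - (p.1 : ℤ)) * s).negOnePow : ℤ) • (a * Py p b))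
    (hPxx : ∀ p q, Px p (x q) = if p = q then 1 else 0)
    (hPxy : ∀ p q, Px p (y q) = 0)
    (hPyy : ∀ p q, Py p (y q) = if p = q then 1 else 0)
    (hPyx : ∀ p q, Py p (x q) = 0)
    -- the Hamiltonian, of degree `-2d`, satisfying the classical master equation
    (H : A) (hH : H ∈ 𝒜 (-(2 * (d : ℤ))))
    (hmaster :
      ∑ p ∈ Finset.univ.filter (fun p : (Σ i : Fin (d + 1), Fin (m i)) => p.1 ≠ 0),
        Px p H * Py p H = 0)
    -- the values of `D` on the generators: `D = 0` on `R`, `D x = ∂H/∂y`, `D y = ∂H/∂x`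
    (hDx : ∀ p, D (x p) = if p.1 = 0 then 0 else Py p H)
    (hDy : ∀ p, D (y p) = Px p H) :
    ∀ a : A, D (D a) = 0 := by
  have hPyH : ∀ p, p.1 = 0 → Py p H = 0 := fun p hp =>
    hneg 1 one_pos _ (by simpa [hp] using hPydeg p _ H hH)
  have hmaster' : ∑ p, Px p H * Py p H = 0 := by
    rw [← hmaster, Finset.sum_filter]
    refine Finset.sum_congr rfl fun p _ => ?_
    split_ifs with hp
    · rfl
    · rw [hPyH p (not_not.mp hp), mul_zero]
  have hD : IsGradedDerivation 𝒜 1 D :=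
    ⟨hDdeg _ _, fun b ha => by rw [one_mul]; exact hDleib _ _ b ha⟩
  have hX : ∀ p, IsGradedDerivation 𝒜 (p.1 : ℤ) (Px p) := fun p =>
    ⟨hPxdeg p _ _, hPxleib p _ _⟩
  have hY : ∀ p, IsGradedDerivation 𝒜 ((2 * d + 1 : ℤ) - (p.1 : ℤ)) (Py p) := fun p =>
    ⟨fun ha => by rw [← add_sub_assoc]; exact hPydeg p _ _ ha, hPyleib p _ _⟩
  have hDDzero := IsGradedDerivation.comp_self_eq_zero_of_master_equation hcomm
    (by rintro _ (⟨p, rfl⟩ | ⟨p, rfl⟩); exacts [⟨_, hxdeg p⟩, ⟨_, hydeg p⟩]) hgen hX hY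
    hPxx hPxy hPyy hPyx hH (even_neg.mpr (even_two_mul _)) (fun p => by ring) hmaster' hD
    (fun p => by rw [hDx]; split_ifs with hp; exacts [(hPyH p hp).symm, rfl]) hDy
  exact LinearMap.congr_fun hDDzero

/-- **`d ∘ d = 0` for the Darboux-form differential defined by a Hamiltonian
satisfying the classical master equation.**

Let `K` be a field of characteristic zero and `A` a graded-commutative algebra over
`K` (a `ℤ`-graded `K`-algebra, concentrated in degrees `≤ 0`, with
`ab = (−1)^{|a||b|} ba`), freely generated over the smooth base `R = K[x⁰₁,…,x⁰ₘ]` by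
generators `x^{-i}_j` in degree `−i` for `i = 1,…,d` and `y^{i-2d-1}_j` in degree
`i − 2d − 1` for `i = 0,…,d`.  Here the generators are encoded as families
`x p, y p` for `p = (i, j)` with `i : Fin (d+1)`, `j : Fin (m i)`, with `x (0, j)`
the degree-`0` polynomial generators; freeness is encoded by the data of the partial
derivative operators `Px p = ∂/∂x_p` and `Py p = ∂/∂y_p` (graded derivations of the
appropriate degrees, dual to the generators), together with generation of `A` by the
generators.

Suppose `H ∈ A^{-2d}` satisfies the classical master equation
`Σ_{i=1}^{d} Σ_j (∂H/∂x^{-i}_j)(∂H/∂y^{i-2d-1}_j) = 0` in `A^{1-2d}`.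
Define a degree-`+1` derivation `D` on `A` by `D = 0` on `R` (i.e. on the degree-`0`
generators) and `D x^{-i}_j = ∂H/∂y^{i-2d-1}_j`, `D y^{i-2d-1}_j = ∂H/∂x^{-i}_j`.
Then `D ∘ D = 0`, so `(A, D)` is a commutative differential graded algebra. -/
theorem darboux_differential_squares_to_zero
    (K : Type) [Field K] [CharZero K] (A : Type) [Ring A] [Algebra K A]
    (𝒜 : ℤ → Submodule K A) [GradedRing 𝒜]
    (d : ℕ) (m : Fin (d + 1) → ℕ)
    (x y : (Σ i : Fin (d + 1), Fin (m i)) → A)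
    -- degrees of the generators
    (hxdeg : ∀ p, x p ∈ 𝒜 (-(p.1 : ℤ)))
    (hydeg : ∀ p, y p ∈ 𝒜 ((p.1 : ℤ) - (2 * d + 1)))
    -- `A` is concentrated in degrees `≤ 0`
    (hneg : ∀ n : ℤ, 0 < n → ∀ a ∈ 𝒜 n, a = 0)
    -- graded commutativity
    (hcomm : ∀ (s t : ℤ) (a b : A), a ∈ 𝒜 s → b ∈ 𝒜 t →
        a * b = ((s * t).negOnePow : ℤ) • (b * a))
    -- `A` is generated over `K` by the generators
    (hgen : Algebra.adjoin K (Set.range x ∪ Set.range y) = ⊤)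
    -- the differential: a `K`-linear degree `+1` graded derivation
    (D : A →ₗ[K] A)
    (hDdeg : ∀ (s : ℤ) (a : A), a ∈ 𝒜 s → D a ∈ 𝒜 (s + 1))
    (hDleib : ∀ (s : ℤ) (a b : A), a ∈ 𝒜 s →
        D (a * b) = D a * b + (s.negOnePow : ℤ) • (a * D b))
    -- the partial derivatives: `K`-linear graded derivations dual to the generators
    (Px Py : (Σ i : Fin (d + 1), Fin (m i)) → (A →ₗ[K] A))
    (hPxdeg : ∀ p (s : ℤ) (a : A), a ∈ 𝒜 s → Px p a ∈ 𝒜 (s + (p.1 : ℤ)))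
    (hPydeg : ∀ p (s : ℤ) (a : A), a ∈ 𝒜 s → Py p a ∈ 𝒜 (s + (2 * d + 1) - (p.1 : ℤ)))
    (hPxleib : ∀ p (s : ℤ) (a b : A), a ∈ 𝒜 s →
        Px p (a * b) = Px p a * b + (((p.1 : ℤ) * s).negOnePow : ℤ) • (a * Px p b))
    (hPyleib : ∀ p (s : ℤ) (a b : A), a ∈ 𝒜 s →
        Py p (a * b)
          = Py p a * b + ((((2 * d + 1 : ℤ) - (p.1 : ℤ)) * s).negOnePow : ℤ) • (a * Py p b))
    (hPxx : ∀ p q, Px p (x q) = if p = q then 1 else 0)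
    (hPxy : ∀ p q, Px p (y q) = 0)
    (hPyy : ∀ p q, Py p (y q) = if p = q then 1 else 0)
    (hPyx : ∀ p q, Py p (x q) = 0)
    -- the Hamiltonian, of degree `-2d`, satisfying the classical master equation
    (H : A) (hH : H ∈ 𝒜 (-(2 * (d : ℤ))))
    (hmaster :
      ∑ p ∈ Finset.univ.filter (fun p : (Σ i : Fin (d + 1), Fin (m i)) => p.1 ≠ 0),
        Px p H * Py p H = 0)
    -- the values of `D` on the generators: `D = 0` on `R`, `D x = ∂H/∂y`, `D y = ∂H/∂x`
    (hDx : ∀ p, D (x p) = if p.1 = 0 then 0 else Py p H)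
    (hDy : ∀ p, D (y p) = Px p H) :
    ∀ a : A, D (D a) = 0 :=
  darboux_differential_squares_to_zero_general K A 𝒜 d m x y hxdeg hydeg hneg hcomm hgen D hDdeg
    hDleib Px Py hPxdeg hPydeg hPxleib hPyleib hPxx hPxy hPyy hPyx H hH hmaster hDx hDy
end
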